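/- arXiv:0811.3263 — 5 statements merged into one kernel-verified Lean document; each statement's English description precedes it below -/
import Mathlib

section
/- If A is an associative L-torus over a field F of characteristic not 2 (i.e., an L-graded associative unital F-algebra such that each homogeneous component A^σ is one-dimensional and spanned by an invertible element), then A decomposes as the direct sum of its center Z(A) and the span [A,A] of all commutators: A = Z(A) ⊕ [A,A]. -/
/-!
Every nonzero homogeneous element of a torus is a unit spanning its component. If a component
`A^σ` is not central, pick `y ∈ A^σ` and a homogeneous unit `w` not commuting with `y`; then
`w y w⁻¹ = γ y` with `γ ≠ 1`, and `(γ - 1) y = [w, y w⁻¹]`, so `A^σ ⊆ [A,A]`. If `A^σ` is central,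
homogeneous `a`, `b` of degrees adding up to `σ` commute (cancel the unit `a` in
`a (b a) = (b a) a`), so the `σ`-component of every commutator vanishes. As the components of
a central element are central, an element of `Z(A) ∩ [A,A]` has all its components zero.
-/

open DirectSum

section GradedAlgebra

variable {ι R A : Type*} [DecidableEq ι] [CommRing R] [Ring A] [Algebra R A]
  (𝒜 : ι → Submodule R A)

def commutatorSpan (R A : Type*) [CommRing R] [Ring A] [Algebra R A] : Submodule R A :=
  Submodule.span R {x : A | ∃ a b : A, x = a * b - b * a}

theorem mem_center_of_forall_homogeneous_commute [DirectSum.Decomposition 𝒜] {x : A}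
    (h : ∀ i, ∀ a ∈ 𝒜 i, a * x = x * a) : x ∈ Subalgebra.center R A := by
  rw [Subalgebra.mem_center_iff]
  intro b
  induction b using DirectSum.Decomposition.inductionOn 𝒜 with
  | zero => simp
  | homogeneous a => exact h _ a a.2
  | add a b ha hb => rw [add_mul, mul_add, ha, hb]

theorem Units.val_inv_mem_neg [AddGroup ι] [GradedAlgebra 𝒜] {i : ι} (u : Aˣ)
    (hu : (u : A) ∈ 𝒜 i) : ((u⁻¹ : Aˣ) : A) ∈ 𝒜 (-i) := by
  have h : (u : A) * decompose 𝒜 (↑u⁻¹ : A) (-i) = 1 := by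
    rw [← coe_decompose_mul_add_of_left_mem 𝒜 hu, Units.mul_inv, add_neg_cancel,
      decompose_of_mem_same 𝒜 SetLike.GradedOne.one_mem]
  rw [← mul_one ((u⁻¹ : Aˣ) : A), ← h, Units.inv_mul_cancel_left]
  exact SetLike.coe_mem _

theorem decompose_mem_center [AddCancelCommMonoid ι] [GradedAlgebra 𝒜] {x : A}
    (hx : x ∈ Subalgebra.center R A) (i : ι) :
    (decompose 𝒜 x i : A) ∈ Subalgebra.center R A := by
  refine mem_center_of_forall_homogeneous_commute 𝒜 fun j a ha => ?_
  rw [← coe_decompose_mul_add_of_left_mem 𝒜 ha, ← coe_decompose_mul_add_of_right_mem 𝒜 ha,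
    Subalgebra.mem_center_iff.mp hx a, add_comm]

theorem decompose_eq_zero_of_mem_commutatorSpan [AddCommMonoid ι] [GradedAlgebra 𝒜] {k : ι}
    (hk : ∀ i j, i + j = k → ∀ a ∈ 𝒜 i, ∀ b ∈ 𝒜 j, a * b = b * a) {x : A}
    (hx : x ∈ commutatorSpan R A) : (decompose 𝒜 x k : A) = 0 := by
  let bracket : A →ₗ[R] A →ₗ[R] A :=
    (LinearMap.mul R A - (LinearMap.mul R A).flip).compr₂ (GradedAlgebra.proj 𝒜 k)
  have hbracket : bracket = 0 := by
    refine decompose_lhom_ext 𝒜 fun i => LinearMap.ext fun a =>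
      decompose_lhom_ext 𝒜 fun j => LinearMap.ext fun b => ?_
    by_cases hij : i + j = k
    · simp [bracket, hk i j hij a a.2 b b.2]
    · have hba := SetLike.GradedMul.mul_mem b.2 a.2
      rw [add_comm] at hba
      have hcomm := sub_mem (SetLike.GradedMul.mul_mem a.2 b.2) hba
      simpa [bracket] using decompose_of_mem_ne 𝒜 hcomm hij
  suffices commutatorSpan R A ≤ LinearMap.ker (GradedAlgebra.proj 𝒜 k) from this hx
  refine Submodule.span_le.mpr ?_
  rintro _ ⟨a, b, rfl⟩
  simpa [bracket] using LinearMap.congr_fun₂ hbracket a b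

end GradedAlgebra

section Torus

variable {ι F A : Type*} [Field F] [Ring A] [Algebra F A]

def IsTorus (𝒜 : ι → Submodule F A) : Prop :=
  ∀ i, ∃ u : A, IsUnit u ∧ 𝒜 i = Submodule.span F {u}

namespace IsTorus

variable {𝒜 : ι → Submodule F A}

theorem exists_smul_eq (h : IsTorus 𝒜) {i : ι} {a : A} (ha : a ∈ 𝒜 i) (ha0 : a ≠ 0) :
    ∃ u : A, IsUnit u ∧ 𝒜 i = Submodule.span F {u} ∧ ∃ c : F, c ≠ 0 ∧ c • u = a := by
  obtain ⟨u, hu, hspan⟩ := h i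
  obtain ⟨c, rfl⟩ := Submodule.mem_span_singleton.mp (hspan ▸ ha)
  exact ⟨u, hu, hspan, c, by rintro rfl; simp at ha0, rfl⟩

theorem isUnit_of_mem (h : IsTorus 𝒜) {i : ι} {a : A} (ha : a ∈ 𝒜 i) (ha0 : a ≠ 0) :
    IsUnit a := by
  obtain ⟨u, hu, -, c, hc, rfl⟩ := h.exists_smul_eq ha ha0
  rw [Algebra.smul_def]
  exact (hc.isUnit.map (algebraMap F A)).mul hu

theorem eq_span_of_mem (h : IsTorus 𝒜) {i : ι} {a : A} (ha : a ∈ 𝒜 i) (ha0 : a ≠ 0) :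
    𝒜 i = Submodule.span F {a} := by
  obtain ⟨u, -, hspan, c, hc, rfl⟩ := h.exists_smul_eq ha ha0
  rw [hspan, Submodule.span_singleton_smul_eq hc.isUnit]

theorem le_center_of_mem_center (h : IsTorus 𝒜) {i : ι} {a : A} (ha : a ∈ 𝒜 i) (ha0 : a ≠ 0)
    (hz : a ∈ Subalgebra.center F A) : 𝒜 i ≤ (Subalgebra.center F A).toSubmodule := by
  rw [h.eq_span_of_mem ha ha0, Submodule.span_le, Set.singleton_subset_iff]
  exact hz

theorem commute_of_add_le_center [AddCommMonoid ι] [SetLike.GradedMul 𝒜] (h : IsTorus 𝒜)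
    {i j : ι} (hc : 𝒜 (i + j) ≤ (Subalgebra.center F A).toSubmodule)
    {a b : A} (ha : a ∈ 𝒜 i) (hb : b ∈ 𝒜 j) : a * b = b * a := by
  obtain rfl | ha0 := eq_or_ne a 0
  · simp
  have hba : b * a ∈ 𝒜 (i + j) := add_comm j i ▸ SetLike.GradedMul.mul_mem hb ha
  refine (h.isUnit_of_mem ha ha0).mul_right_cancel ?_
  rw [mul_assoc]
  exact (Subalgebra.mem_center_iff (R := F)).mp (hc hba) a

variable [AddCommGroup ι] [DecidableEq ι] [GradedAlgebra 𝒜]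

theorem le_commutatorSpan_of_not_le_center (h : IsTorus 𝒜) {i : ι}
    (hi : ¬𝒜 i ≤ (Subalgebra.center F A).toSubmodule) : 𝒜 i ≤ commutatorSpan F A := by
  obtain ⟨y, hy, hyz⟩ := SetLike.not_le_iff_exists.mp hi
  have hy0 : y ≠ 0 := by rintro rfl; exact hyz (zero_mem _)
  obtain ⟨j, w, hw, hwy⟩ : ∃ j, ∃ w ∈ 𝒜 j, w * y ≠ y * w := by
    by_contra! hcomm
    exact hyz (mem_center_of_forall_homogeneous_commute 𝒜 hcomm)
  obtain ⟨W, rfl⟩ := h.isUnit_of_mem hw (by rintro rfl; simp at hwy)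
  have hconj : ↑W * y * ↑W⁻¹ ∈ 𝒜 i := by
    simpa using SetLike.GradedMul.mul_mem (SetLike.GradedMul.mul_mem hw hy)
      (Units.val_inv_mem_neg 𝒜 W hw)
  obtain ⟨γ, hγ⟩ := Submodule.mem_span_singleton.mp (h.eq_span_of_mem hy hy0 ▸ hconj)
  have hγ1 : γ - 1 ≠ 0 := by
    rintro hγ1
    rw [sub_eq_zero.mp hγ1, one_smul] at hγ
    exact hwy ((Units.eq_mul_inv_iff_mul_eq W).mp hγ).symm
  have hdiff : ↑W * y * ↑W⁻¹ - y ∈ commutatorSpan F A :=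
    Submodule.subset_span ⟨W, y * ↑W⁻¹, by simp [mul_assoc]⟩
  have hsmul : (γ - 1) • y = ↑W * y * ↑W⁻¹ - y := by rw [sub_smul, one_smul, hγ]
  have hyC : y ∈ commutatorSpan F A := (Submodule.smul_mem_iff _ hγ1).mp (hsmul ▸ hdiff)
  rw [h.eq_span_of_mem hy hy0, Submodule.span_le, Set.singleton_subset_iff]
  exact hyC

theorem isCompl_center_commutatorSpan (h : IsTorus 𝒜) :
    IsCompl (Subalgebra.center F A).toSubmodule (commutatorSpan F A) := by
  constructor
  · rw [Submodule.disjoint_def]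
    intro x hxZ hxC
    have hcomp : ∀ i, (decompose 𝒜 x i : A) = 0 := by
      intro i
      by_contra hne
      have hcen :=
        h.le_center_of_mem_center (SetLike.coe_mem _) hne (decompose_mem_center 𝒜 hxZ i)
      exact hne (decompose_eq_zero_of_mem_commutatorSpan 𝒜
        (fun j k hjk _ ha _ hb => h.commute_of_add_le_center (hjk ▸ hcen) ha hb) hxC)
    refine (decompose 𝒜).injective ?_
    ext i
    simp [hcomp]
  · rw [codisjoint_iff_le_sup, ← (Decomposition.isInternal 𝒜).submodule_iSup_eq_top]
    refine iSup_le fun i => ?_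
    by_cases hi : 𝒜 i ≤ (Subalgebra.center F A).toSubmodule
    · exact le_sup_of_le_left hi
    · exact le_sup_of_le_right (h.le_commutatorSpan_of_not_le_center hi)

end IsTorus

end Torus

theorem stmt0_general
    (F : Type*) [Field F]
    (L : Type*) [AddCommGroup L] [DecidableEq L]
    (A : Type*) [Ring A] [Algebra F A]
    (𝒜 : L → Submodule F A) [DirectSum.Decomposition 𝒜]
    (hone : (1 : A) ∈ 𝒜 0)
    (hmul : ∀ σ τ : L, ∀ a ∈ 𝒜 σ, ∀ b ∈ 𝒜 τ, a * b ∈ 𝒜 (σ + τ))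
    (htorus : ∀ σ : L, ∃ u : A, IsUnit u ∧ 𝒜 σ = Submodule.span F {u}) :
    IsCompl (Subalgebra.toSubmodule (Subalgebra.center F A))
      (Submodule.span F {x : A | ∃ a b : A, x = a * b - b * a}) := by
  let : GradedAlgebra 𝒜 :=
    { one_mem := hone
      mul_mem := fun σ τ _ _ ha hb => hmul σ τ _ ha _ hb }
  exact IsTorus.isCompl_center_commutatorSpan htorus

/-- If `A` is an associative `L`-torus over a field `F` of characteristic ≠ 2, then
`A = Z(A) ⊕ [A,A]`. -/
theorem stmt0
    (F : Type*) [Field F] (hchar : (2 : F) ≠ 0)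
    (L : Type*) [AddCommGroup L] [DecidableEq L]
    (A : Type*) [Ring A] [Algebra F A]
    (𝒜 : L → Submodule F A) [DirectSum.Decomposition 𝒜]
    (hone : (1 : A) ∈ 𝒜 0)
    (hmul : ∀ σ τ : L, ∀ a ∈ 𝒜 σ, ∀ b ∈ 𝒜 τ, a * b ∈ 𝒜 (σ + τ))
    (htorus : ∀ σ : L, ∃ u : A, IsUnit u ∧ 𝒜 σ = Submodule.span F {u}) :
    IsCompl (Subalgebra.toSubmodule (Subalgebra.center F A))
      (Submodule.span F {x : A | ∃ a b : A, x = a * b - b * a}) :=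
  stmt0_general F L A 𝒜 hone hmul htorus
end

section
/- Let A be an associative L-torus and let α be a homogeneous element of A not belonging to the center Z(A). Then α lies in the span of commutators [A,A]. (Key step: there is a homogeneous β with βα = δαβ for some scalar δ ≠ 1, and then [αβ⁻¹, β] = (1−δ)α.) -/
/-!
Choose a homogeneous `β` not commuting with `α`; it exists because homogeneous elements span `A`.
In a torus the nonzero homogeneous elements are units and `αβ`, `βα` lie in the same
one-dimensional component, so `βα = δ αβ` with `δ ≠ 1`. Then `[αβ⁻¹, β] = (1 - δ) α`.
-/

theorem DirectSum.Decomposition.commute_of_forall_commute_homogeneous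
    {ι A σ : Type*} [DecidableEq ι] [Semiring A] [SetLike σ A] [AddSubmonoidClass σ A]
    (𝒜 : ι → σ) [DirectSum.Decomposition 𝒜] {a : A}
    (h : ∀ i, ∀ b ∈ 𝒜 i, Commute a b) (b : A) : Commute a b :=
  DirectSum.Decomposition.inductionOn 𝒜 (Commute.zero_right a)
    (fun m ↦ h _ m m.2) (fun _ _ ↦ Commute.add_right) b

theorem IsUnit.of_mem_span_singleton {F A : Type*} [Field F] [Ring A] [Algebra F A]
    {u x : A} (hu : IsUnit u) (hx : x ∈ Submodule.span F {u}) (hx0 : x ≠ 0) : IsUnit x := by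
  obtain ⟨c, rfl⟩ := Submodule.mem_span_singleton.mp hx
  have hc : c ≠ 0 := by rintro rfl; exact hx0 (zero_smul F u)
  simpa only [Units.smul_mk0] using hu.smul (Units.mk0 c hc)

theorem exists_smul_eq_of_mem_span_singleton {K V : Type*} [DivisionRing K] [AddCommGroup V]
    [Module K V] {w x y : V} (hx : x ∈ Submodule.span K {w}) (hy : y ∈ Submodule.span K {w})
    (hx0 : x ≠ 0) : ∃ δ : K, y = δ • x := by
  obtain ⟨a, rfl⟩ := Submodule.mem_span_singleton.mp hx
  obtain ⟨b, rfl⟩ := Submodule.mem_span_singleton.mp hy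
  have ha : a ≠ 0 := by rintro rfl; exact hx0 (zero_smul K w)
  exact ⟨b * a⁻¹, by rw [smul_smul, mul_assoc, inv_mul_cancel₀ ha, mul_one]⟩

theorem mem_span_commutators_of_mul_eq_smul_mul {F A : Type*} [Field F] [Ring A] [Algebra F A]
    {α β : A} {δ : F} (hβ : IsUnit β) (hδ : δ ≠ 1) (h : β * α = δ • (α * β)) :
    α ∈ Submodule.span F {x : A | ∃ a b : A, x = a * b - b * a} := by
  have hcomm : α * ↑hβ.unit⁻¹ * β - β * (α * ↑hβ.unit⁻¹) = (1 - δ) • α := by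
    rw [mul_assoc, hβ.val_inv_mul, mul_one, ← mul_assoc, h, smul_mul_assoc, mul_assoc,
      hβ.mul_val_inv, mul_one, sub_smul, one_smul]
  have hδ' : (1 - δ)⁻¹ * (1 - δ) = 1 := inv_mul_cancel₀ (sub_ne_zero.mpr hδ.symm)
  rw [← one_smul F α, ← hδ', ← smul_smul, ← hcomm]
  exact Submodule.smul_mem _ _ (Submodule.subset_span ⟨_, _, rfl⟩)

theorem stmt1_general
    (F : Type*) [Field F]
    (L : Type*) [AddCommGroup L] [DecidableEq L]
    (A : Type*) [Ring A] [Algebra F A]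
    (𝒜 : L → Submodule F A) [DirectSum.Decomposition 𝒜]
    (hmul : ∀ σ τ : L, ∀ a ∈ 𝒜 σ, ∀ b ∈ 𝒜 τ, a * b ∈ 𝒜 (σ + τ))
    (htorus : ∀ σ : L, ∃ u : A, IsUnit u ∧ 𝒜 σ = Submodule.span F {u})
    (σ : L) (α : A) (hα : α ∈ 𝒜 σ) (hcen : α ∉ Subalgebra.center F A) :
    α ∈ Submodule.span F {x : A | ∃ a b : A, x = a * b - b * a} := by
  have hα0 : α ≠ 0 := fun h ↦ hcen (h ▸ Subalgebra.zero_mem _)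
  have : Nontrivial A := nontrivial_of_ne α 0 hα0
  have isUnit_of_mem {ρ : L} {x : A} (hx : x ∈ 𝒜 ρ) (hx0 : x ≠ 0) : IsUnit x := by
    obtain ⟨u, hu, hρ⟩ := htorus ρ
    exact hu.of_mem_span_singleton (hρ ▸ hx) hx0
  obtain ⟨τ, β, hβ, hαβ⟩ : ∃ τ, ∃ β ∈ 𝒜 τ, ¬Commute α β := by
    by_contra! h
    exact hcen (Subalgebra.mem_center_iff.mpr fun b ↦
      (DirectSum.Decomposition.commute_of_forall_commute_homogeneous 𝒜 h b).eq.symm)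
  have hβ0 : β ≠ 0 := fun h ↦ hαβ (h ▸ Commute.zero_right α)
  have hβu := isUnit_of_mem hβ hβ0
  obtain ⟨w, -, hw⟩ := htorus (σ + τ)
  have hαβw : α * β ∈ Submodule.span F {w} := hw ▸ hmul σ τ α hα β hβ
  have hβαw : β * α ∈ Submodule.span F {w} := hw ▸ add_comm τ σ ▸ hmul τ σ β hβ α hα
  obtain ⟨δ, hδ⟩ := exists_smul_eq_of_mem_span_singleton hαβw hβαw
    ((isUnit_of_mem hα hα0).mul hβu).ne_zero
  have hδ1 : δ ≠ 1 := by
    rintro rfl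
    exact hαβ (one_smul F (α * β) ▸ hδ).symm
  exact mem_span_commutators_of_mul_eq_smul_mul hβu hδ1 hδ

/-- In an associative `L`-torus, any homogeneous element not in the center lies
in the span of commutators. -/
theorem stmt1
    (F : Type*) [Field F]
    (L : Type*) [AddCommGroup L] [DecidableEq L]
    (A : Type*) [Ring A] [Algebra F A]
    (𝒜 : L → Submodule F A) [DirectSum.Decomposition 𝒜]
    (hone : (1 : A) ∈ 𝒜 0)
    (hmul : ∀ σ τ : L, ∀ a ∈ 𝒜 σ, ∀ b ∈ 𝒜 τ, a * b ∈ 𝒜 (σ + τ))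
    (htorus : ∀ σ : L, ∃ u : A, IsUnit u ∧ 𝒜 σ = Submodule.span F {u})
    (σ : L) (α : A) (hα : α ∈ 𝒜 σ) (hcen : α ∉ Subalgebra.center F A) :
    α ∈ Submodule.span F {x : A | ∃ a b : A, x = a * b - b * a} :=
  stmt1_general F L A 𝒜 hmul htorus σ α hα hcen
end

section
/- Let Γ be an abelian group without 2-torsion, L a subgroup of Γ containing 2Γ, and S a subset of Γ such that Γ is generated by L ∪ S. Suppose Γ′, L′, S′ satisfy the same hypotheses. Then any group isomorphism η : L → L′ with η(2S) = 2S′ extends uniquely to a group isomorphism of Γ onto Γ′ mapping S onto S′. -/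
/-!
Without 2-torsion, doubling is injective, so a homomorphism into `Γ'` is determined by its
values on any subgroup containing `2Γ`; this gives uniqueness. For existence, halve
`g ↦ η(2g)`: the `g` for which `η(2g)` lies in `2Γ'` form a subgroup, which contains `L` because
`η(2x) = 2η(x)` and contains `S` because `η(2S) = 2S'`, hence is all of `Γ`. The halves of `η`
and of `η⁻¹` compose to homomorphisms that are the identity on `L` and `L'`, hence everywhere.
-/

open Function

lemma AddMonoidHom.exists_comp_eq_of_range_le {A B C : Type*} [AddGroup A] [AddGroup B]
    [AddGroup C] {f : A →+ C} {d : B →+ C} (hd : Injective d) (h : f.range ≤ d.range) :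
    ∃ φ : A →+ B, d.comp φ = f :=
  ⟨(AddMonoidHom.ofInjective hd).symm.toAddMonoidHom.comp
      (f.codRestrict d.range fun a => h ⟨a, rfl⟩),
    by ext a; simp⟩

def doubleHom (Γ : Type*) [AddCommGroup Γ] : Γ →+ Γ where
  toFun g := g + g
  map_zero' := add_zero 0
  map_add' a b := add_add_add_comm a b a b

section

variable {Γ Γ' : Type*} [AddCommGroup Γ] [AddCommGroup Γ']

lemma doubleHom_injective (h2 : ∀ g : Γ, g + g = 0 → g = 0) : Injective (doubleHom Γ) :=
  (injective_iff_map_eq_zero _).2 h2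

lemma eq_of_add_self_eq_add_self (h2 : ∀ g : Γ, g + g = 0 → g = 0) {a b : Γ}
    (h : a + a = b + b) : a = b :=
  doubleHom_injective h2 h

variable {L : AddSubgroup Γ} (hL : ∀ g : Γ, g + g ∈ L)
include hL

lemma AddMonoidHom.eq_of_eqOn_of_add_self_mem (h2' : ∀ g : Γ', g + g = 0 → g = 0)
    {φ ψ : Γ →+ Γ'} (h : ∀ x : L, φ x = ψ x) : φ = ψ :=
  AddMonoidHom.ext fun g => eq_of_add_self_eq_add_self h2' <| by
    rw [← map_add, ← map_add]
    exact h ⟨g + g, hL g⟩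

lemma range_le_range_doubleHom {S : Set Γ} (hgen : AddSubgroup.closure ((L : Set Γ) ∪ S) = ⊤)
    (f : L →+ Γ') (hS : ∀ s ∈ S, ∃ t, f ⟨s + s, hL s⟩ = t + t) :
    (f.comp ((doubleHom Γ).codRestrict L hL)).range ≤ (doubleHom Γ').range := by
  rintro _ ⟨g, rfl⟩
  suffices AddSubgroup.closure ((L : Set Γ) ∪ S) ≤
      (doubleHom Γ').range.comap (f.comp ((doubleHom Γ).codRestrict L hL)) from
    this (hgen ▸ AddSubgroup.mem_top g)
  rw [AddSubgroup.closure_le]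
  rintro x (hx | hx)
  · exact ⟨f ⟨x, hx⟩, (map_add f ⟨x, hx⟩ ⟨x, hx⟩).symm⟩
  · obtain ⟨t, ht⟩ := hS x hx
    exact ⟨t, ht.symm⟩

lemma exists_half_hom (h2' : ∀ g : Γ', g + g = 0 → g = 0) {S : Set Γ}
    (hgen : AddSubgroup.closure ((L : Set Γ) ∪ S) = ⊤)
    (f : L →+ Γ') (hS : ∀ s ∈ S, ∃ t, f ⟨s + s, hL s⟩ = t + t) :
    ∃ φ : Γ →+ Γ', ∀ g, φ g + φ g = f ⟨g + g, hL g⟩ := by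
  obtain ⟨φ, hφ⟩ := AddMonoidHom.exists_comp_eq_of_range_le (doubleHom_injective h2')
    (range_le_range_doubleHom hL hgen f hS)
  exact ⟨φ, fun g => DFunLike.congr_fun hφ g⟩

variable (h2' : ∀ g : Γ', g + g = 0 → g = 0) {f : L →+ Γ'} {φ : Γ →+ Γ'}
  (hφ : ∀ g, φ g + φ g = f ⟨g + g, hL g⟩)
include h2' hφ

lemma apply_coe_eq_of_half (x : L) : φ x = f x :=
  eq_of_add_self_eq_add_self h2' <| (hφ x).trans (map_add f x x)

lemma image_subset_of_half {S : Set Γ} {S' : Set Γ'}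
    (hS : ∀ s ∈ S, ∃ s' ∈ S', f ⟨s + s, hL s⟩ = s' + s') : φ '' S ⊆ S' := by
  rintro _ ⟨s, hs, rfl⟩
  obtain ⟨s', hs', h⟩ := hS s hs
  rwa [eq_of_add_self_eq_add_self h2' ((hφ s).trans h)]

end

/-- Let `Γ` be an abelian group without 2-torsion, `L ≤ Γ` with `2Γ ⊆ L`, and `S ⊆ Γ` with
`Γ = ⟨L ∪ S⟩`; similarly for `Γ', L', S'`. Then any isomorphism `η : L ≃ L'` with
`η(2S) = 2S'` extends uniquely to an isomorphism `Γ ≃ Γ'` mapping `S` onto `S'`. -/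
theorem stmt3
    (Γ Γ' : Type*) [AddCommGroup Γ] [AddCommGroup Γ']
    (h2 : ∀ g : Γ, g + g = 0 → g = 0) (h2' : ∀ g : Γ', g + g = 0 → g = 0)
    (L : AddSubgroup Γ) (L' : AddSubgroup Γ')
    (hL : ∀ g : Γ, g + g ∈ L) (hL' : ∀ g : Γ', g + g ∈ L')
    (S : Set Γ) (S' : Set Γ')
    (hgen : AddSubgroup.closure ((L : Set Γ) ∪ S) = ⊤)
    (hgen' : AddSubgroup.closure ((L' : Set Γ') ∪ S') = ⊤)
    (η : L ≃+ L')
    (hη : ∀ x : L, ((x : Γ) ∈ {g : Γ | ∃ s ∈ S, g = s + s}) ↔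
        ((η x : Γ') ∈ {g : Γ' | ∃ s ∈ S', g = s + s})) :
    ∃! ψ : Γ ≃+ Γ', (∀ x : L, ψ (x : Γ) = (η x : Γ')) ∧ ⇑ψ '' S = S' := by
  have hS : ∀ s ∈ S, ∃ s' ∈ S', (η ⟨s + s, hL s⟩ : Γ') = s' + s' :=
    fun s hs => (hη _).1 ⟨s, hs, rfl⟩
  have hS' : ∀ s' ∈ S', ∃ s ∈ S, (η.symm ⟨s' + s', hL' s'⟩ : Γ) = s + s :=
    fun s' hs' => (hη _).2 (by rw [AddEquiv.apply_symm_apply]; exact ⟨s', hs', rfl⟩)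
  obtain ⟨φ, hφ⟩ := exists_half_hom hL h2' hgen (L'.subtype.comp η.toAddMonoidHom)
    fun s hs => (hS s hs).imp fun _ h => h.2
  obtain ⟨ψ, hψ⟩ := exists_half_hom hL' h2 hgen' (L.subtype.comp η.symm.toAddMonoidHom)
    fun s' hs' => (hS' s' hs').imp fun _ h => h.2
  have hφL := apply_coe_eq_of_half hL h2' hφ
  have hψL := apply_coe_eq_of_half hL' h2 hψ
  let e : Γ ≃+ Γ' := φ.toAddEquiv ψ
    (AddMonoidHom.eq_of_eqOn_of_add_self_mem hL h2 fun x => by simp [hφL, hψL])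
    (AddMonoidHom.eq_of_eqOn_of_add_self_mem hL' h2' fun x => by simp [hφL, hψL])
  have himage : e '' S = S' :=
    (image_subset_of_half hL h2' hφ hS).antisymm fun t ht =>
      ⟨ψ t, image_subset_of_half hL' h2 hψ hS' ⟨t, ht, rfl⟩, e.apply_symm_apply t⟩
  refine ⟨e, ⟨hφL, himage⟩, fun e' he' => AddEquiv.toAddMonoidHom_injective ?_⟩
  exact AddMonoidHom.eq_of_eqOn_of_add_self_mem hL h2' fun x => (he'.1 x).trans (hφL x).symm
end

section
/- Let ξ : X × X → A be a nondegenerate hermitian form over (A,−), E = span{E(x,y)}, with involution * satisfying E(x,y)* = E(y,x). Then the set F = span{U(x,y) : x,y ∈ X}, where U(x,y) = E(x,y) − E(y,x), equals both {T ∈ E : T* = −T} and the intersection U(X,ξ) ∩ E, where u(X,ξ) = {T ∈ End_A(X) : ξ(Tx,y) + ξ(x,Ty) = 0}. -/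
/-!
The involution `st` is the adjoint for `ξ` on `𝔈`: `ξ (T* z) w = ξ z (T w)`. On a generator this
is `ξ (E(y, x) z) w = ξ z x * ξ y w = ξ z (E(x, y) w)`, and the identity survives `F`-linear
combinations because the `F`-linearity of `st` lets a scalar of `F` cross from one argument of `ξ`
to the other, even though `star` need not fix `F`. By nondegeneracy, `T* = -T` then says exactly
that `T` lies in `u(X, ξ)`. Finally `U(x, y)* = -U(x, y)`, and conversely a skew `T ∈ 𝔈` equals
`(T - T*) / 2`, which lies in `𝔉` because `S - S* ∈ 𝔉` for every generator `S = E(x, y)`.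
-/

open MulOpposite Submodule

structure IsHermitianForm {A X : Type*} [Ring A] [StarRing A] [AddCommGroup X] [Module Aᵐᵒᵖ X]
    (ξ : X → X → A) : Prop where
  add_right : ∀ x y y' : X, ξ x (y + y') = ξ x y + ξ x y'
  smul_right : ∀ (α : A) (x y : X), ξ x (op α • y) = ξ x y * α
  symm : ∀ x y : X, ξ y x = star (ξ x y)

namespace IsHermitianForm

variable {A X : Type*} [Ring A] [StarRing A] [AddCommGroup X] [Module Aᵐᵒᵖ X] {ξ : X → X → A}

theorem add_left (h : IsHermitianForm ξ) (x x' y : X) : ξ (x + x') y = ξ x y + ξ x' y := by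
  rw [h.symm, h.add_right, star_add, ← h.symm, ← h.symm]

theorem smul_left (h : IsHermitianForm ξ) (α : A) (x y : X) :
    ξ (op α • x) y = star α * ξ x y := by
  rw [h.symm, h.smul_right, star_mul, ← h.symm]

theorem zero_right (h : IsHermitianForm ξ) (x : X) : ξ x 0 = 0 :=
  (AddMonoidHom.mk' (ξ x) (h.add_right x)).map_zero

theorem zero_left (h : IsHermitianForm ξ) (y : X) : ξ 0 y = 0 :=
  (AddMonoidHom.mk' (ξ · y) fun x x' ↦ h.add_left x x' y).map_zero

theorem neg_left (h : IsHermitianForm ξ) (x y : X) : ξ (-x) y = -ξ x y :=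
  (AddMonoidHom.mk' (ξ · y) fun x x' ↦ h.add_left x x' y).map_neg x

theorem sub_left (h : IsHermitianForm ξ) (x x' y : X) : ξ (x - x') y = ξ x y - ξ x' y :=
  (AddMonoidHom.mk' (ξ · y) fun x x' ↦ h.add_left x x' y).map_sub x x'

theorem eq_of_forall_apply_eq (h : IsHermitianForm ξ) (hnd : ∀ x : X, (∀ y, ξ x y = 0) → x = 0)
    {x x' : X} (hxx' : ∀ y, ξ x y = ξ x' y) : x = x' :=
  sub_eq_zero.1 <| hnd _ fun y ↦ by rw [h.sub_left, hxx', sub_self]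

/-- The paper's `E(x, y)`. -/
def rankOne (h : IsHermitianForm ξ) (x y : X) : X →ₗ[Aᵐᵒᵖ] X where
  toFun z := op (ξ y z) • x
  map_add' z z' := by simp only [h.add_right, op_add, add_smul]
  map_smul' α z := by
    rw [← op_unop α, h.smul_right, op_mul, mul_smul]
    rfl

@[simp]
theorem rankOne_apply (h : IsHermitianForm ξ) (x y z : X) : h.rankOne x y z = op (ξ y z) • x :=
  rfl

theorem apply_rankOne_right (h : IsHermitianForm ξ) (x y z w : X) :
    ξ w (h.rankOne x y z) = ξ w x * ξ y z :=
  h.smul_right _ _ _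

theorem apply_rankOne_left (h : IsHermitianForm ξ) (x y z w : X) :
    ξ (h.rankOne x y z) w = ξ z y * ξ x w := by
  rw [rankOne_apply, h.smul_left, ← h.symm]

theorem smul_right_eq_mul_algebraMap {F : Type*} [CommSemiring F] [Algebra F A] [Module F X]
    [IsScalarTower F Aᵐᵒᵖ X] (h : IsHermitianForm ξ) (c : F) (x y : X) :
    ξ x (c • y) = ξ x y * algebraMap F A c := by
  rw [← h.smul_right, ← MulOpposite.algebraMap_apply, algebraMap_smul]

section CommRing

variable {F : Type*} [CommRing F] [Module F X] [SMulCommClass Aᵐᵒᵖ F X]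

theorem smul_rankOne (h : IsHermitianForm ξ) (c : F) (x y : X) :
    c • h.rankOne x y = h.rankOne (c • x) y := by
  ext z
  exact (smul_comm (op (ξ y z)) c x).symm

variable (F) in
/-- The paper's `𝔈`. -/
def rankOneSpan (h : IsHermitianForm ξ) : Submodule F (X →ₗ[Aᵐᵒᵖ] X) :=
  span F {S | ∃ x y, S = h.rankOne x y}

variable (F) in
/-- The paper's `𝔉`. -/
def skewSpan (h : IsHermitianForm ξ) : Submodule F (X →ₗ[Aᵐᵒᵖ] X) :=
  span F {S | ∃ x y, S = h.rankOne x y - h.rankOne y x}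

variable (F) in
theorem rankOne_mem (h : IsHermitianForm ξ) (x y : X) : h.rankOne x y ∈ h.rankOneSpan F :=
  subset_span ⟨x, y, rfl⟩

@[elab_as_elim]
theorem rankOneSpan_induction (h : IsHermitianForm ξ) {p : h.rankOneSpan F → Prop}
    (rankOne : ∀ x y, p ⟨h.rankOne x y, h.rankOne_mem F x y⟩) (zero : p 0)
    (add : ∀ S T, p S → p T → p (S + T)) (smul : ∀ (c : F) T, p T → p (c • T))
    (T : h.rankOneSpan F) : p T := by
  obtain ⟨T, hT⟩ := T
  induction hT using span_induction with
  | mem S hS =>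
    obtain ⟨x, y, rfl⟩ := hS
    exact rankOne x y
  | zero => exact zero
  | add S T _ _ hS hT => exact add _ _ hS hT
  | smul c T _ hT => exact smul c _ hT

theorem rankOne_smul_right (h : IsHermitianForm ξ) (st : h.rankOneSpan F →ₗ[F] h.rankOneSpan F)
    (hst : ∀ x y, st ⟨h.rankOne x y, h.rankOne_mem F x y⟩ = ⟨h.rankOne y x, h.rankOne_mem F y x⟩)
    (c : F) (x y : X) : h.rankOne y (c • x) = c • h.rankOne y x := by
  have hsmul : (⟨h.rankOne (c • x) y, h.rankOne_mem F _ _⟩ : h.rankOneSpan F) =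
      c • ⟨h.rankOne x y, h.rankOne_mem F x y⟩ :=
    Subtype.ext (h.smul_rankOne c x y).symm
  have := congrArg (fun S ↦ (st S : X →ₗ[Aᵐᵒᵖ] X)) hsmul
  rwa [hst, map_smul, hst] at this

theorem sub_st_mem_skewSpan (h : IsHermitianForm ξ) (st : h.rankOneSpan F →ₗ[F] h.rankOneSpan F)
    (hst : ∀ x y, st ⟨h.rankOne x y, h.rankOne_mem F x y⟩ = ⟨h.rankOne y x, h.rankOne_mem F y x⟩)
    (T : h.rankOneSpan F) : (T : X →ₗ[Aᵐᵒᵖ] X) - st T ∈ h.skewSpan F := by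
  induction T using h.rankOneSpan_induction with
  | rankOne x y => rw [hst]; exact subset_span ⟨x, y, rfl⟩
  | zero => simp
  | add S T hS hT => simpa [add_sub_add_comm] using add_mem hS hT
  | smul c T hT => simpa [smul_sub] using smul_mem _ c hT

variable [Algebra F A] [IsScalarTower F Aᵐᵒᵖ X]

theorem apply_smul_right_mul (h : IsHermitianForm ξ) (st : h.rankOneSpan F →ₗ[F] h.rankOneSpan F)
    (hst : ∀ x y, st ⟨h.rankOne x y, h.rankOne_mem F x y⟩ = ⟨h.rankOne y x, h.rankOne_mem F y x⟩)
    (c : F) (x y z w : X) : ξ z (c • x) * ξ y w = ξ (c • z) x * ξ y w := by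
  have := congrArg (fun T : X →ₗ[Aᵐᵒᵖ] X ↦ ξ (T z) w) (h.rankOne_smul_right st hst c x y)
  simpa only [LinearMap.smul_apply, ← LinearMap.map_smul_of_tower, apply_rankOne_left] using this

theorem apply_smul_left_eq (h : IsHermitianForm ξ) (st : h.rankOneSpan F →ₗ[F] h.rankOneSpan F)
    (hst : ∀ x y, st ⟨h.rankOne x y, h.rankOne_mem F x y⟩ = ⟨h.rankOne y x, h.rankOne_mem F y x⟩)
    (T : h.rankOneSpan F) (c : F) (z w : X) :
    ξ (c • z) ((T : X →ₗ[Aᵐᵒᵖ] X) w) = ξ z (c • (T : X →ₗ[Aᵐᵒᵖ] X) w) := by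
  induction T using h.rankOneSpan_induction with
  | rankOne x y =>
    rw [← LinearMap.smul_apply, h.smul_rankOne, h.apply_rankOne_right, h.apply_rankOne_right,
      h.apply_smul_right_mul st hst]
  | zero => simp [h.zero_right]
  | add S T hS hT => simp [h.add_right, hS, hT]
  | smul c' T hT =>
    simp only [coe_smul, LinearMap.smul_apply]
    rw [smul_comm c c', h.smul_right_eq_mul_algebraMap, h.smul_right_eq_mul_algebraMap, hT]

theorem apply_st_left (h : IsHermitianForm ξ) (st : h.rankOneSpan F →ₗ[F] h.rankOneSpan F)
    (hst : ∀ x y, st ⟨h.rankOne x y, h.rankOne_mem F x y⟩ = ⟨h.rankOne y x, h.rankOne_mem F y x⟩)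
    (T : h.rankOneSpan F) (z w : X) :
    ξ ((st T : X →ₗ[Aᵐᵒᵖ] X) z) w = ξ z ((T : X →ₗ[Aᵐᵒᵖ] X) w) := by
  induction T using h.rankOneSpan_induction generalizing z with
  | rankOne x y => rw [hst, h.apply_rankOne_left, h.apply_rankOne_right]
  | zero => simp [h.zero_left, h.zero_right]
  | add S T hS hT => simp [h.add_left, h.add_right, hS, hT]
  | smul c T hT =>
    simp only [map_smul, coe_smul, LinearMap.smul_apply]
    rw [← LinearMap.map_smul_of_tower, hT, h.apply_smul_left_eq st hst]

theorem st_eq_neg_iff (h : IsHermitianForm ξ) (hnd : ∀ x : X, (∀ y, ξ x y = 0) → x = 0)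
    (st : h.rankOneSpan F →ₗ[F] h.rankOneSpan F)
    (hst : ∀ x y, st ⟨h.rankOne x y, h.rankOne_mem F x y⟩ = ⟨h.rankOne y x, h.rankOne_mem F y x⟩)
    (T : h.rankOneSpan F) :
    st T = -T ↔ ∀ x y, ξ ((T : X →ₗ[Aᵐᵒᵖ] X) x) y + ξ x ((T : X →ₗ[Aᵐᵒᵖ] X) y) = 0 := by
  constructor
  · intro hT x y
    rw [← h.apply_st_left st hst, hT, NegMemClass.coe_neg, LinearMap.neg_apply, h.neg_left,
      add_neg_cancel]
  · intro hT
    ext z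
    refine h.eq_of_forall_apply_eq hnd fun w ↦ ?_
    rw [h.apply_st_left st hst, NegMemClass.coe_neg, LinearMap.neg_apply, h.neg_left,
      eq_neg_iff_add_eq_zero, add_comm, hT]

end CommRing

theorem skewSpan_eq {F : Type*} [Field F] [Module F X] [SMulCommClass Aᵐᵒᵖ F X]
    (hchar : (2 : F) ≠ 0) (h : IsHermitianForm ξ) (st : h.rankOneSpan F →ₗ[F] h.rankOneSpan F)
    (hst : ∀ x y, st ⟨h.rankOne x y, h.rankOne_mem F x y⟩ = ⟨h.rankOne y x, h.rankOne_mem F y x⟩) :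
    (h.skewSpan F : Set (X →ₗ[Aᵐᵒᵖ] X)) =
      {T | ∃ hT : T ∈ h.rankOneSpan F, st ⟨T, hT⟩ = -⟨T, hT⟩} := by
  ext T
  constructor
  · intro hT
    have hle : h.skewSpan F ≤
        (LinearMap.ker (st + LinearMap.id)).map (h.rankOneSpan F).subtype := by
      refine span_le.2 ?_
      rintro _ ⟨x, y, rfl⟩
      refine ⟨⟨_, h.rankOne_mem F x y⟩ - ⟨_, h.rankOne_mem F y x⟩, ?_, rfl⟩
      simp [hst]
    obtain ⟨S, hS, rfl⟩ := hle hT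
    exact ⟨S.2, by simpa [add_eq_zero_iff_eq_neg] using hS⟩
  · rintro ⟨hT, hneg⟩
    have hsub := h.sub_st_mem_skewSpan st hst ⟨T, hT⟩
    rw [hneg, NegMemClass.coe_neg, sub_neg_eq_add, ← two_smul F] at hsub
    simpa [smul_smul, inv_mul_cancel₀ hchar] using smul_mem _ (2 : F)⁻¹ hsub

end IsHermitianForm

theorem stmt11_general
    (F : Type*) [Field F] (hchar : (2 : F) ≠ 0)
    (A : Type*) [Ring A] [Algebra F A] [StarRing A]
    (X : Type*) [AddCommGroup X] [Module Aᵐᵒᵖ X]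
    [Module F X] [SMulCommClass Aᵐᵒᵖ F X] [IsScalarTower F Aᵐᵒᵖ X]
    (ξ : X → X → A)
    (haddr : ∀ x y y' : X, ξ x (y + y') = ξ x y + ξ x y')
    (hsmulr : ∀ (α : A) (x y : X), ξ x (op α • y) = ξ x y * α)
    (hsymm : ∀ x y : X, ξ y x = star (ξ x y))
    (hnd : ∀ x : X, (∀ y, ξ x y = 0) → x = 0)
    (𝔈 : Submodule F (X →ₗ[Aᵐᵒᵖ] X))
    (h𝔈 : 𝔈 = Submodule.span F
        {S : X →ₗ[Aᵐᵒᵖ] X | ∃ x y : X, ∀ z, S z = op (ξ y z) • x})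
    (st : ↥𝔈 →ₗ[F] ↥𝔈)
    (hst : ∀ (x y : X) (S T : ↥𝔈),
        (∀ z, (S : X →ₗ[Aᵐᵒᵖ] X) z = op (ξ y z) • x) →
        (∀ z, (T : X →ₗ[Aᵐᵒᵖ] X) z = op (ξ x z) • y) → st S = T)
    (𝔉 : Submodule F (X →ₗ[Aᵐᵒᵖ] X))
    (h𝔉 : 𝔉 = Submodule.span F
        {S : X →ₗ[Aᵐᵒᵖ] X | ∃ x y : X, ∀ z, S z = op (ξ y z) • x - op (ξ x z) • y}) :
    ((𝔉 : Set (X →ₗ[Aᵐᵒᵖ] X)) = {T | ∃ h : T ∈ 𝔈, st ⟨T, h⟩ = -⟨T, h⟩}) ∧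
    ((𝔉 : Set (X →ₗ[Aᵐᵒᵖ] X)) =
      {T : X →ₗ[Aᵐᵒᵖ] X | ∀ x y : X, ξ (T x) y + ξ x (T y) = 0} ∩ (𝔈 : Set (X →ₗ[Aᵐᵒᵖ] X))) := by
  have hξ : IsHermitianForm ξ := ⟨haddr, hsmulr, hsymm⟩
  have h𝔈' : 𝔈 = hξ.rankOneSpan F := by
    simp only [h𝔈, IsHermitianForm.rankOneSpan, LinearMap.ext_iff, hξ.rankOne_apply]
  have h𝔉' : 𝔉 = hξ.skewSpan F := by
    simp only [h𝔉, IsHermitianForm.skewSpan, LinearMap.ext_iff, LinearMap.sub_apply,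
      hξ.rankOne_apply]
  subst h𝔈' h𝔉'
  have hst' : ∀ x y, st ⟨hξ.rankOne x y, hξ.rankOne_mem F x y⟩ =
      ⟨hξ.rankOne y x, hξ.rankOne_mem F y x⟩ :=
    fun x y ↦ hst x y _ _ (fun _ ↦ rfl) (fun _ ↦ rfl)
  have hskew := hξ.skewSpan_eq hchar st hst'
  refine ⟨hskew, hskew.trans ?_⟩
  ext T
  exact ⟨fun ⟨hT, hneg⟩ ↦ ⟨(hξ.st_eq_neg_iff hnd st hst' ⟨T, hT⟩).1 hneg, hT⟩,
    fun ⟨hadj, hT⟩ ↦ ⟨hT, (hξ.st_eq_neg_iff hnd st hst' ⟨T, hT⟩).2 hadj⟩⟩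

/-- For a nondegenerate hermitian form `ξ` with `𝔈 = span{E(x,y)}` carrying the involution
`*` (with `E(x,y)* = E(y,x)`), the span `𝔉` of the operators `U(x,y) = E(x,y) − E(y,x)`
equals `{T ∈ 𝔈 : T* = −T}` and equals `u(X,ξ) ∩ 𝔈`. -/
theorem stmt11
    (F : Type*) [Field F] (hchar : (2 : F) ≠ 0)
    (A : Type*) [Ring A] [Algebra F A] [StarRing A]
    (X : Type*) [AddCommGroup X] [Module Aᵐᵒᵖ X]
    [Module F X] [SMulCommClass Aᵐᵒᵖ F X] [IsScalarTower F Aᵐᵒᵖ X]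
    (ξ : X → X → A)
    (haddl : ∀ x x' y : X, ξ (x + x') y = ξ x y + ξ x' y)
    (haddr : ∀ x y y' : X, ξ x (y + y') = ξ x y + ξ x y')
    (hsmull : ∀ (α : A) (x y : X), ξ (op α • x) y = star α * ξ x y)
    (hsmulr : ∀ (α : A) (x y : X), ξ x (op α • y) = ξ x y * α)
    (hsymm : ∀ x y : X, ξ y x = star (ξ x y))
    (hnd : ∀ x : X, (∀ y, ξ x y = 0) → x = 0)
    (𝔈 : Submodule F (X →ₗ[Aᵐᵒᵖ] X))
    (h𝔈 : 𝔈 = Submodule.span F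
        {S : X →ₗ[Aᵐᵒᵖ] X | ∃ x y : X, ∀ z, S z = op (ξ y z) • x})
    (st : ↥𝔈 →ₗ[F] ↥𝔈)
    (hst2 : ∀ T, st (st T) = T)
    (hst : ∀ (x y : X) (S T : ↥𝔈),
        (∀ z, (S : X →ₗ[Aᵐᵒᵖ] X) z = op (ξ y z) • x) →
        (∀ z, (T : X →ₗ[Aᵐᵒᵖ] X) z = op (ξ x z) • y) → st S = T)
    (𝔉 : Submodule F (X →ₗ[Aᵐᵒᵖ] X))
    (h𝔉 : 𝔉 = Submodule.span F
        {S : X →ₗ[Aᵐᵒᵖ] X | ∃ x y : X, ∀ z, S z = op (ξ y z) • x - op (ξ x z) • y}) :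
    ((𝔉 : Set (X →ₗ[Aᵐᵒᵖ] X)) = {T | ∃ h : T ∈ 𝔈, st ⟨T, h⟩ = -⟨T, h⟩}) ∧
    ((𝔉 : Set (X →ₗ[Aᵐᵒᵖ] X)) =
      {T : X →ₗ[Aᵐᵒᵖ] X | ∀ x y : X, ξ (T x) y + ξ x (T y) = 0} ∩ (𝔈 : Set (X →ₗ[Aᵐᵒᵖ] X))) :=
  stmt11_general F hchar A X ξ haddr hsmulr hsymm hnd 𝔈 h𝔈 st hst 𝔉 h𝔉
end

section
/- Let (A,−) be an associative L-torus with involution, L a subgroup of Γ, and ξ : X × X → A a nondegenerate Γ-graded hermitian form of finite graded F-dimension. If ξ is finely graded (dim_F X^σ ≤ 1 for all σ) and 2·supp_Γ(X) ⊆ L, then ξ is anisotropic: ξ(x,x) ≠ 0 for every nonzero homogeneous x ∈ X. -/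
open MulOpposite

/-!
Suppose `x ∈ X^σ` is nonzero with `ξ(x, x) = 0`. By nondegeneracy some homogeneous `z ∈ X^τ`
has `ξ(x, z) ≠ 0`, so `σ + τ ∈ L`; together with `2σ ∈ L` this gives `σ - τ ∈ L`, hence an
invertible `b ∈ A^{σ-τ}`. Then `z·b ∈ X^σ = F x`, say `z·b = c x`, and
`ξ(x, z) b = ξ(x, z·b) = c ξ(x, x) = 0`, contradicting the invertibility of `b`.
-/

theorem DirectSum.exists_mem_map_ne_zero {ι M N σ : Type*} [DecidableEq ι] [AddCommMonoid M]
    [SetLike σ M] [AddSubmonoidClass σ M] (ℳ : ι → σ) [DirectSum.Decomposition ℳ]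
    [AddCommMonoid N] (f : M →+ N) {y : M} (hy : f y ≠ 0) :
    ∃ i, ∃ z ∈ ℳ i, f z ≠ 0 := by
  by_contra! h
  refine hy (DirectSum.Decomposition.inductionOn ℳ (motive := fun m => f m = 0)
    (map_zero f) (fun m => h _ m m.2) (fun m m' hm hm' => ?_) y)
  rw [map_add, hm, hm', add_zero]

theorem Submodule.exists_smul_eq_of_finrank_le_one {K V : Type*} [DivisionRing K]
    [AddCommGroup V] [Module K V] {p : Submodule K V} [FiniteDimensional K p]
    (hp : Module.finrank K p ≤ 1) {x z : V} (hx : x ∈ p) (hx0 : x ≠ 0) (hz : z ∈ p) :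
    ∃ c : K, c • x = z := by
  have hx0' : (⟨x, hx⟩ : p) ≠ 0 := by simpa using hx0
  have : Nontrivial p := nontrivial_of_ne _ _ hx0'
  have hp1 : Module.finrank K p = 1 := le_antisymm hp Module.finrank_pos
  obtain ⟨c, hc⟩ := (finrank_eq_one_iff_of_nonzero' _ hx0').mp hp1 ⟨z, hz⟩
  exact ⟨c, congrArg Subtype.val hc⟩

theorem stmt13_general
    (F : Type*) [Field F]
    (Γ : Type*) [AddCommGroup Γ] [DecidableEq Γ] (L : AddSubgroup Γ)
    (A : Type*) [Ring A] [Algebra F A]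
    (𝒜 : Γ → Submodule F A) [DirectSum.Decomposition 𝒜]
    (hsuppA : ∀ σ : Γ, σ ∉ L → 𝒜 σ = ⊥)
    (htorus : ∀ σ : Γ, σ ∈ L → ∃ u : A, IsUnit u ∧ 𝒜 σ = Submodule.span F {u})
    (X : Type*) [AddCommGroup X] [Module Aᵐᵒᵖ X] [Module F X]
    [IsScalarTower F Aᵐᵒᵖ X]
    (ℳ : Γ → Submodule F X) [DirectSum.Decomposition ℳ]
    (hmod : ∀ σ τ : Γ, ∀ x ∈ ℳ σ, ∀ a ∈ 𝒜 τ, op a • x ∈ ℳ (σ + τ))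
    (ξ : X → X → A)
    (haddr : ∀ x y y' : X, ξ x (y + y') = ξ x y + ξ x y')
    (hsmulr : ∀ (α : A) (x y : X), ξ x (op α • y) = ξ x y * α)
    (hgr : ∀ σ τ : Γ, ∀ x ∈ ℳ σ, ∀ y ∈ ℳ τ, ξ x y ∈ 𝒜 (σ + τ))
    (hnd : ∀ x : X, (∀ y, ξ x y = 0) → x = 0)
    (hfin : ∀ σ : Γ, FiniteDimensional F ↥(ℳ σ))
    (hfine : ∀ σ : Γ, Module.finrank F ↥(ℳ σ) ≤ 1)
    (hsupp2 : ∀ σ : Γ, ℳ σ ≠ ⊥ → σ + σ ∈ L) :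
    ∀ σ : Γ, ∀ x ∈ ℳ σ, x ≠ 0 → ξ x x ≠ 0 := by
  intro σ x hx hx0 hxx
  obtain ⟨y, hy⟩ : ∃ y, ξ x y ≠ 0 := by
    by_contra! h
    exact hx0 (hnd x h)
  obtain ⟨τ, z, hz, hxz⟩ : ∃ τ, ∃ z ∈ ℳ τ, ξ x z ≠ 0 :=
    DirectSum.exists_mem_map_ne_zero ℳ (AddMonoidHom.mk' (ξ x) (haddr x)) hy
  have hστ : σ + τ ∈ L := by
    by_contra h
    exact hxz (by simpa [hsuppA _ h] using hgr σ τ x hx z hz)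
  have hσσ : σ + σ ∈ L := hsupp2 σ fun h => hx0 (by simpa [h] using hx)
  obtain ⟨b, hb, hbspan⟩ := htorus (σ - τ) (by simpa using L.sub_mem hσσ hστ)
  have hbz : op b • z ∈ ℳ σ := by
    simpa using hmod τ (σ - τ) z hz b (hbspan ▸ Submodule.mem_span_singleton_self b)
  have := hfin σ
  obtain ⟨c, hc⟩ := Submodule.exists_smul_eq_of_finrank_le_one (hfine σ) hx hx0 hbz
  apply hxz
  rw [← hb.mul_left_eq_zero, ← hsmulr, ← hc, ← algebraMap_smul Aᵐᵒᵖ c x,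
    MulOpposite.algebraMap_apply, hsmulr, hxx, zero_mul]

/-- A nondegenerate `Γ`-graded hermitian form of finite graded `F`-dimension over an
associative `L`-torus with involution that is finely graded and satisfies
`2·supp_Γ(X) ⊆ L` is anisotropic. -/
theorem stmt13
    (F : Type*) [Field F] (hchar : (2 : F) ≠ 0)
    (Γ : Type*) [AddCommGroup Γ] [DecidableEq Γ] (L : AddSubgroup Γ)
    (A : Type*) [Ring A] [Algebra F A] [StarRing A]
    (𝒜 : Γ → Submodule F A) [DirectSum.Decomposition 𝒜]
    (hone : (1 : A) ∈ 𝒜 0)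
    (hmul : ∀ σ τ : Γ, ∀ a ∈ 𝒜 σ, ∀ b ∈ 𝒜 τ, a * b ∈ 𝒜 (σ + τ))
    (hsuppA : ∀ σ : Γ, σ ∉ L → 𝒜 σ = ⊥)
    (htorus : ∀ σ : Γ, σ ∈ L → ∃ u : A, IsUnit u ∧ 𝒜 σ = Submodule.span F {u})
    (hstarg : ∀ σ : Γ, ∀ a ∈ 𝒜 σ, star a ∈ 𝒜 σ)
    (X : Type*) [AddCommGroup X] [Module Aᵐᵒᵖ X] [Module F X]
    [SMulCommClass Aᵐᵒᵖ F X] [IsScalarTower F Aᵐᵒᵖ X]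
    (ℳ : Γ → Submodule F X) [DirectSum.Decomposition ℳ]
    (hmod : ∀ σ τ : Γ, ∀ x ∈ ℳ σ, ∀ a ∈ 𝒜 τ, op a • x ∈ ℳ (σ + τ))
    (ξ : X → X → A)
    (haddl : ∀ x x' y : X, ξ (x + x') y = ξ x y + ξ x' y)
    (haddr : ∀ x y y' : X, ξ x (y + y') = ξ x y + ξ x y')
    (hsmull : ∀ (α : A) (x y : X), ξ (op α • x) y = star α * ξ x y)
    (hsmulr : ∀ (α : A) (x y : X), ξ x (op α • y) = ξ x y * α)
    (hsymm : ∀ x y : X, ξ y x = star (ξ x y))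
    (hgr : ∀ σ τ : Γ, ∀ x ∈ ℳ σ, ∀ y ∈ ℳ τ, ξ x y ∈ 𝒜 (σ + τ))
    (hnd : ∀ x : X, (∀ y, ξ x y = 0) → x = 0)
    (hfin : ∀ σ : Γ, FiniteDimensional F ↥(ℳ σ))
    (hfine : ∀ σ : Γ, Module.finrank F ↥(ℳ σ) ≤ 1)
    (hsupp2 : ∀ σ : Γ, ℳ σ ≠ ⊥ → σ + σ ∈ L) :
    ∀ σ : Γ, ∀ x ∈ ℳ σ, x ≠ 0 → ξ x x ≠ 0 :=
  stmt13_general F Γ L A 𝒜 hsuppA htorus X ℳ hmod ξ haddr hsmulr hgr hnd hfin hfine hsupp2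
end
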